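/- arXiv:1308.3561 — 8 statements merged into one kernel-verified Lean document; each statement's English description precedes it below -/
import Mathlib

section
/- If {a_n} is a sequence of nonnegative reals satisfying a_{n+1} ≤ (1 − γ_n) a_n + δ_n for all n ≥ 1, where γ_n ∈ (0,1) with ∑ γ_n = ∞, and ∑ |δ_n| < ∞, then a_n → 0. -/
/-! Unrolling the recursion from a late index `N` gives
`a m ≤ (∏_{N ≤ k < m} (1 - γ k)) a N + ∑_{N ≤ k < m} |δ k|`.
The product is at most `exp (-∑_{N ≤ k < m} γ k)`, which tends to `0` because `∑ γ k = ∞`,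
while the sum is bounded by the tail of the convergent series `∑ |δ k|`, which is small for
large `N`. -/

open Filter Finset Topology

lemma le_prod_Ico_mul_add_sum_Ico {a c d : ℕ → ℝ} {N : ℕ}
    (hc : ∀ n, c n ∈ Set.Icc (0 : ℝ) 1) (hd : ∀ n, 0 ≤ d n)
    (hrec : ∀ n ≥ N, a (n + 1) ≤ c n * a n + d n) :
    ∀ m ≥ N, a m ≤ (∏ k ∈ Ico N m, c k) * a N + ∑ k ∈ Ico N m, d k := by
  intro m hm
  induction m, hm using Nat.le_induction with
  | base => simp
  | succ m hNm ih =>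
    have hS : 0 ≤ ∑ k ∈ Ico N m, d k := sum_nonneg fun k _ => hd k
    have hcS : c m * ∑ k ∈ Ico N m, d k ≤ ∑ k ∈ Ico N m, d k :=
      mul_le_of_le_one_left hS (hc m).2
    rw [prod_Ico_succ_top hNm, sum_Ico_succ_top hNm]
    calc a (m + 1) ≤ c m * a m + d m := hrec m hNm
      _ ≤ c m * ((∏ k ∈ Ico N m, c k) * a N + ∑ k ∈ Ico N m, d k) + d m := by
        gcongr
        exact (hc m).1
      _ ≤ (∏ k ∈ Ico N m, c k) * c m * a N + (∑ k ∈ Ico N m, d k + d m) := by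
        linarith

lemma prod_one_sub_le_exp_neg_sum {ι : Type*} (s : Finset ι) {γ : ι → ℝ}
    (hγ : ∀ i ∈ s, γ i ≤ 1) : ∏ i ∈ s, (1 - γ i) ≤ Real.exp (-∑ i ∈ s, γ i) := by
  rw [← sum_neg_distrib, Real.exp_sum]
  exact prod_le_prod (fun i hi => sub_nonneg.2 (hγ i hi)) fun i _ => Real.one_sub_le_exp_neg _

lemma tendsto_prod_Ico_one_sub_zero {γ : ℕ → ℝ} (hγ : ∀ n, γ n ∈ Set.Icc (0 : ℝ) 1)
    (hsum : Tendsto (fun m => ∑ n ∈ range m, γ n) atTop atTop) (N : ℕ) :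
    Tendsto (fun m => ∏ k ∈ Ico N m, (1 - γ k)) atTop (𝓝 0) := by
  have hIco : Tendsto (fun m => ∑ k ∈ Ico N m, γ k) atTop atTop := by
    refine (tendsto_atTop_add_const_right _ (-∑ k ∈ range N, γ k) hsum).congr' ?_
    filter_upwards [eventually_ge_atTop N] with m hm
    rw [sum_Ico_eq_sub _ hm, sub_eq_add_neg]
  have hexp : Tendsto (fun m => Real.exp (-∑ k ∈ Ico N m, γ k)) atTop (𝓝 0) :=
    Real.tendsto_exp_atBot.comp (tendsto_neg_atTop_atBot.comp hIco)
  refine tendsto_of_tendsto_of_tendsto_of_le_of_le tendsto_const_nhds hexp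
    (fun m => prod_nonneg fun k _ => sub_nonneg.2 (hγ k).2)
    fun m => prod_one_sub_le_exp_neg_sum _ fun k _ => (hγ k).2

lemma sum_Ico_le_tsum_sub_sum_range {f : ℕ → ℝ} (hf : Summable f) (h0 : ∀ n, 0 ≤ f n)
    {N m : ℕ} (hNm : N ≤ m) : ∑ k ∈ Ico N m, f k ≤ ∑' k, f k - ∑ k ∈ range N, f k := by
  rw [sum_Ico_eq_sub _ hNm]
  linarith [hf.sum_le_tsum (range m) fun k _ => h0 k]

theorem stmt_2 (a γ δ : ℕ → ℝ)
    (ha : ∀ n, 0 ≤ a n)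
    (hγ : ∀ n, γ n ∈ Set.Ioo (0 : ℝ) 1)
    (hrec : ∀ n ≥ 1, a (n + 1) ≤ (1 - γ n) * a n + δ n)
    (hsum : Tendsto (fun N => ∑ n ∈ Finset.range N, γ n) atTop atTop)
    (hδ : Summable fun n => |δ n|) :
    Tendsto a atTop (nhds 0) := by
  have hγ' : ∀ n, γ n ∈ Set.Icc (0 : ℝ) 1 := fun n => Set.Ioo_subset_Icc_self (hγ n)
  have hc : ∀ n, 1 - γ n ∈ Set.Icc (0 : ℝ) 1 := fun n =>
    ⟨sub_nonneg.2 (hγ' n).2, sub_le_self _ (hγ' n).1⟩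
  refine tendsto_order.2 ⟨fun ε hε => .of_forall fun n => hε.trans_le (ha n), fun ε hε => ?_⟩
  obtain ⟨N, hN1, hNtail⟩ : ∃ N ≥ 1, ∑' k, |δ k| - ∑ k ∈ range N, |δ k| < ε / 2 :=
    ((eventually_ge_atTop 1).and ((tendsto_order.1 hδ.hasSum.tendsto_sum_nat).1 _
      (sub_lt_self _ (half_pos hε)))).exists.imp fun N h => ⟨h.1, by linarith [h.2]⟩
  have hunroll := le_prod_Ico_mul_add_sum_Ico hc (fun n => abs_nonneg (δ n))
    fun n hn => (hrec n (hN1.trans hn)).trans (add_le_add_right (le_abs_self _) _)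
  have hprod : ∀ᶠ m in atTop, (∏ k ∈ Ico N m, (1 - γ k)) * a N < ε / 2 := by
    have := (tendsto_prod_Ico_one_sub_zero hγ' hsum N).mul_const (a N)
    rw [zero_mul] at this
    exact (tendsto_order.1 this).2 _ (half_pos hε)
  filter_upwards [hprod, eventually_ge_atTop N] with m hm hNm
  linarith [hunroll m hNm, sum_Ico_le_tsum_sub_sum_range hδ (fun n => abs_nonneg (δ n)) hNm]
end

section
/- Let A be a bounded linear self-adjoint operator on a real Hilbert space H that is strongly positive with coefficient γ̄ > 0, i.e. ⟨Ax, x⟩ ≥ γ̄‖x‖² for all x ∈ H. If 0 < ρ ≤ ‖A‖⁻¹, then ‖I − ρA‖ ≤ 1 − ρ γ̄. -/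
open scoped RealInnerProductSpace

/-- Generalized Cauchy–Schwarz for a symmetric positive operator. -/
lemma gen_cauchy_schwarz {H : Type*} [NormedAddCommGroup H] [InnerProductSpace ℝ H]
    (T : H →L[ℝ] H) (hsym : ∀ x y : H, ⟪T x, y⟫ = ⟪x, T y⟫)
    (hpos : ∀ x : H, 0 ≤ ⟪T x, x⟫) (x y : H) :
    ⟪T x, y⟫ ^ 2 ≤ ⟪T x, x⟫ * ⟪T y, y⟫ := by
  have key : ∀ t : ℝ, 0 ≤ ⟪T y, y⟫ * (t * t) + (2 * ⟪T x, y⟫) * t + ⟪T x, x⟫ := by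
    intro t
    have h0 := hpos (x + t • y)
    have expand : ⟪T (x + t • y), x + t • y⟫ =
        ⟪T y, y⟫ * (t * t) + (2 * ⟪T x, y⟫) * t + ⟪T x, x⟫ := by
      have hyx : ⟪T y, x⟫ = ⟪T x, y⟫ := by
        rw [hsym y x, real_inner_comm]
      simp only [map_add, map_smul, inner_add_add_self, inner_add_left, inner_add_right,
        inner_smul_left, inner_smul_right, real_inner_smul_left, real_inner_smul_right, conj_trivial]
      rw [hyx]
      ring
    linarith [h0, expand ▸ h0]
  have hd := discrim_le_zero key
  rw [discrim] at hd
  nlinarith [hd]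

theorem stmt_3 {H : Type*} [NormedAddCommGroup H] [InnerProductSpace ℝ H]
    [CompleteSpace H] (A : H →L[ℝ] H) (hsa : IsSelfAdjoint A)
    (γbar : ℝ) (hγbar : 0 < γbar)
    (hA : ∀ x : H, γbar * ‖x‖ ^ 2 ≤ ⟪A x, x⟫)
    (ρ : ℝ) (hρ0 : 0 < ρ) (hρ : ρ ≤ ‖A‖⁻¹) :
    ‖ContinuousLinearMap.id ℝ H - ρ • A‖ ≤ 1 - ρ * γbar := by
  set T : H →L[ℝ] H := ContinuousLinearMap.id ℝ H - ρ • A with hT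
  -- ‖A‖ > 0
  have hAnorm : 0 < ‖A‖ := by
    by_contra h
    push_neg at h
    have : ‖A‖ = 0 := le_antisymm h (norm_nonneg _)
    rw [this, inv_zero] at hρ
    linarith
  have hρA : ρ * ‖A‖ ≤ 1 := by
    rw [← le_div_iff₀ hAnorm] at *
    simpa [one_div] using hρ
  -- there is a nonzero vector
  have hex : ∃ x : H, x ≠ 0 := by
    by_contra h
    push_neg at h
    have : A = 0 := by ext x; simp [h x, h (A x)]
    rw [this, norm_zero] at hAnorm
    exact lt_irrefl 0 hAnorm
  obtain ⟨x₀, hx₀⟩ := hex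
  -- γbar ≤ ‖A‖
  have hγA : γbar ≤ ‖A‖ := by
    have h1 := hA x₀
    have h2 : ⟪A x₀, x₀⟫ ≤ ‖A‖ * ‖x₀‖ ^ 2 := by
      calc ⟪A x₀, x₀⟫ ≤ ‖A x₀‖ * ‖x₀‖ := real_inner_le_norm _ _
        _ ≤ (‖A‖ * ‖x₀‖) * ‖x₀‖ := by
            exact mul_le_mul_of_nonneg_right (A.le_opNorm x₀) (norm_nonneg _)
        _ = ‖A‖ * ‖x₀‖ ^ 2 := by ring
    have hx2 : 0 < ‖x₀‖ ^ 2 := pow_pos (norm_pos_iff.mpr hx₀) 2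
    nlinarith
  have hc : 0 ≤ 1 - ρ * γbar := by nlinarith
  -- symmetry of T
  have hsymA : ∀ x y : H, ⟪A x, y⟫ = ⟪x, A y⟫ := fun x y => hsa.isSymmetric x y
  have hsymT : ∀ x y : H, ⟪T x, y⟫ = ⟪x, T y⟫ := by
    intro x y
    simp only [hT, ContinuousLinearMap.sub_apply, ContinuousLinearMap.smul_apply,
      ContinuousLinearMap.id_apply, inner_sub_left, inner_sub_right,
      real_inner_smul_left, real_inner_smul_right]
    rw [hsymA]
  -- inner expansion
  have hTinner : ∀ x : H, ⟪T x, x⟫ = ‖x‖ ^ 2 - ρ * ⟪A x, x⟫ := by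
    intro x
    simp only [hT, ContinuousLinearMap.sub_apply, ContinuousLinearMap.smul_apply,
      ContinuousLinearMap.id_apply, inner_sub_left, real_inner_smul_left,
      real_inner_self_eq_norm_sq]
  -- positivity of T
  have hpos : ∀ x : H, 0 ≤ ⟪T x, x⟫ := by
    intro x
    rw [hTinner]
    have h2 : ⟪A x, x⟫ ≤ ‖A‖ * ‖x‖ ^ 2 := by
      calc ⟪A x, x⟫ ≤ ‖A x‖ * ‖x‖ := real_inner_le_norm _ _
        _ ≤ (‖A‖ * ‖x‖) * ‖x‖ := mul_le_mul_of_nonneg_right (A.le_opNorm x) (norm_nonneg _)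
        _ = ‖A‖ * ‖x‖ ^ 2 := by ring
    nlinarith [sq_nonneg ‖x‖]
  -- upper bound
  have hupper : ∀ x : H, ⟪T x, x⟫ ≤ (1 - ρ * γbar) * ‖x‖ ^ 2 := by
    intro x
    rw [hTinner]
    nlinarith [hA x]
  -- pointwise bound
  refine ContinuousLinearMap.opNorm_le_bound _ hc fun x => ?_
  have hcs := gen_cauchy_schwarz T hsymT hpos x (T x)
  have hTx : ⟪T x, T x⟫ = ‖T x‖ ^ 2 := real_inner_self_eq_norm_sq _
  have h1 : ‖T x‖ ^ 2 * ‖T x‖ ^ 2 ≤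
      ((1 - ρ * γbar) * ‖x‖ ^ 2) * ((1 - ρ * γbar) * ‖T x‖ ^ 2) := by
    have hu1 := hupper x
    have hu2 := hupper (T x)
    have hp1 := hpos x
    have hp2 := hpos (T x)
    calc ‖T x‖ ^ 2 * ‖T x‖ ^ 2 = ⟪T x, T x⟫ ^ 2 := by rw [hTx]; ring
      _ ≤ ⟪T x, x⟫ * ⟪T (T x), T x⟫ := hcs
      _ ≤ ((1 - ρ * γbar) * ‖x‖ ^ 2) * ((1 - ρ * γbar) * ‖T x‖ ^ 2) := by
          apply mul_le_mul hu1 hu2 hp2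
          positivity
  by_cases hz : ‖T x‖ = 0
  · rw [hz]; positivity
  · have hzpos : 0 < ‖T x‖ ^ 2 := by positivity
    have h2 : ‖T x‖ ^ 2 ≤ ((1 - ρ * γbar) * ‖x‖) ^ 2 := by
      nlinarith
    calc ‖T x‖ = Real.sqrt (‖T x‖ ^ 2) := (Real.sqrt_sq (norm_nonneg _)).symm
      _ ≤ Real.sqrt (((1 - ρ * γbar) * ‖x‖) ^ 2) := Real.sqrt_le_sqrt h2
      _ = (1 - ρ * γbar) * ‖x‖ := Real.sqrt_sq (by positivity)
end

section
/- Let H be a real Hilbert space, A a strongly positive bounded linear self-adjoint operator with coefficient γ̄ > 0, f : H → H an α-contraction (0 < α < 1), T : H → H nonexpansive, and γ a constant with 0 < γ < γ̄/α. Then for all sufficiently small t > 0 (with t‖A‖ < 1), the map x ↦ tγ f(x) + (I − tA)Tx is a contraction on H, hence has a unique fixed point x_t. -/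
open scoped RealInnerProductSpace

lemma selfadj_norm_bound {H : Type*} [NormedAddCommGroup H] [InnerProductSpace ℝ H]
    (S : H →L[ℝ] H) (hsym : ∀ x y : H, ⟪S x, y⟫ = ⟪x, S y⟫)
    (c : ℝ) (hc : 0 ≤ c)
    (h0 : ∀ x : H, 0 ≤ ⟪S x, x⟫) (h1 : ∀ x : H, ⟪S x, x⟫ ≤ c * ‖x‖ ^ 2)
    (x : H) : ‖S x‖ ≤ c * ‖x‖ := by
  by_cases hSx : S x = 0
  · simp [hSx]; positivity
  have hx : x ≠ 0 := by rintro rfl; simp at hSx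
  have hxpos : (0:ℝ) < ‖x‖ := norm_pos_iff.mpr hx
  have hSxpos : (0:ℝ) < ‖S x‖ := norm_pos_iff.mpr hSx
  set y := (‖x‖ / ‖S x‖) • S x with hy
  have hny : ‖y‖ = ‖x‖ := by
    rw [hy, norm_smul, Real.norm_eq_abs, abs_of_nonneg (by positivity)]
    field_simp
  have hiy : ⟪S x, y⟫ = ‖x‖ * ‖S x‖ := by
    rw [hy, real_inner_smul_right, real_inner_self_eq_norm_sq]
    field_simp
  have hsymc : ⟪S y, x⟫ = ⟪S x, y⟫ := by
    rw [hsym y x, real_inner_comm]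
  have key : 4 * ⟪S x, y⟫ = ⟪S (x + y), x + y⟫ - ⟪S (x - y), x - y⟫ := by
    simp only [map_add, map_sub, inner_add_left, inner_add_right, inner_sub_left,
      inner_sub_right]
    linarith [hsymc]
  have h2 : ⟪S (x + y), x + y⟫ ≤ c * ‖x + y‖ ^ 2 := h1 _
  have h3 : 0 ≤ ⟪S (x - y), x - y⟫ := h0 _
  have h4 : ‖x + y‖ ≤ 2 * ‖x‖ := by
    calc ‖x + y‖ ≤ ‖x‖ + ‖y‖ := norm_add_le _ _
    _ = 2 * ‖x‖ := by rw [hny]; ring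
  have h5 : c * ‖x + y‖ ^ 2 ≤ c * (2 * ‖x‖) ^ 2 := by
    apply mul_le_mul_of_nonneg_left _ hc
    have := norm_nonneg (x + y)
    nlinarith
  have : 4 * (‖x‖ * ‖S x‖) ≤ c * (2 * ‖x‖) ^ 2 := by
    rw [← hiy]; linarith
  nlinarith

theorem stmt_6 {H : Type*} [NormedAddCommGroup H] [InnerProductSpace ℝ H]
    [CompleteSpace H] (A : H →L[ℝ] H) (hsa : IsSelfAdjoint A)
    (γbar : ℝ) (hγbar : 0 < γbar)
    (hA : ∀ x : H, γbar * ‖x‖ ^ 2 ≤ ⟪A x, x⟫)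
    (f : H → H) (α : ℝ) (hα : α ∈ Set.Ioo (0 : ℝ) 1)
    (hf : ∀ x y : H, ‖f x - f y‖ ≤ α * ‖x - y‖)
    (T : H → H) (hT : ∀ x y : H, ‖T x - T y‖ ≤ ‖x - y‖)
    (γ : ℝ) (hγ : 0 < γ ∧ γ < γbar / α)
    (t : ℝ) (ht0 : 0 < t) (ht : t * ‖A‖ < 1) :
    (∃ c : ℝ, 0 ≤ c ∧ c < 1 ∧
      ∀ x y : H, ‖((t * γ) • f x + (T x - t • A (T x))) -
        ((t * γ) • f y + (T y - t • A (T y)))‖ ≤ c * ‖x - y‖) ∧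
    ∃! x : H, (t * γ) • f x + (T x - t • A (T x)) = x := by
  obtain ⟨hα0, hα1⟩ := hα
  obtain ⟨hγ0, hγlt⟩ := hγ
  have hγα : γ * α < γbar := by
    rw [lt_div_iff₀ hα0] at hγlt; linarith
  set c : ℝ := max 0 (1 - t * (γbar - γ * α)) with hc
  have hc0 : 0 ≤ c := le_max_left _ _
  have hc1 : c < 1 := by
    apply max_lt one_pos
    nlinarith
  have key : ∀ x y : H, ‖((t * γ) • f x + (T x - t • A (T x))) -
      ((t * γ) • f y + (T y - t • A (T y)))‖ ≤ c * ‖x - y‖ := by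
    rcases subsingleton_or_nontrivial H with hs | hs
    · intro x y
      have : x = y := Subsingleton.elim x y
      subst this
      simp
    · -- γbar ≤ ‖A‖
      obtain ⟨z, hz⟩ := exists_ne (0 : H)
      have hzpos : (0:ℝ) < ‖z‖ := norm_pos_iff.mpr hz
      have hγA : γbar ≤ ‖A‖ := by
        have h1 := hA z
        have h2 : ⟪A z, z⟫ ≤ ‖A z‖ * ‖z‖ := real_inner_le_norm _ _
        have h3 : ‖A z‖ ≤ ‖A‖ * ‖z‖ := A.le_opNorm z
        have h4 : γbar * ‖z‖ ^ 2 ≤ ‖A‖ * ‖z‖ ^ 2 := by nlinarith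
        exact le_of_mul_le_mul_right h4 (pow_pos hzpos 2)
      have htγ : t * γbar ≤ 1 := by nlinarith [A.opNorm_nonneg]
      set S : H →L[ℝ] H := ContinuousLinearMap.id ℝ H - t • A with hS
      have hSapp : ∀ u : H, S u = u - t • A u := fun u => rfl
      have hsym : ∀ u v : H, ⟪S u, v⟫ = ⟪u, S v⟫ := by
        intro u v
        have hAsym : ⟪A u, v⟫ = ⟪u, A v⟫ := hsa.isSymmetric u v
        simp only [hSapp, inner_sub_left, inner_sub_right, real_inner_smul_left,
          real_inner_smul_right]
        rw [hAsym]
      have h0 : ∀ u : H, 0 ≤ ⟪S u, u⟫ := by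
        intro u
        have h2 : ⟪A u, u⟫ ≤ ‖A u‖ * ‖u‖ := real_inner_le_norm _ _
        have h3 : ‖A u‖ ≤ ‖A‖ * ‖u‖ := A.le_opNorm u
        have hnn := norm_nonneg u
        simp only [hSapp, inner_sub_left, real_inner_smul_left,
          real_inner_self_eq_norm_sq]
        nlinarith [mul_le_mul_of_nonneg_left h2 ht0.le,
          mul_le_mul_of_nonneg_left h3 ht0.le,
          mul_nonneg (by linarith : (0:ℝ) ≤ 1 - t * ‖A‖) (sq_nonneg ‖u‖),
          mul_le_mul_of_nonneg_right (mul_le_mul_of_nonneg_left h3 ht0.le) hnn]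
      have h1 : ∀ u : H, ⟪S u, u⟫ ≤ (1 - t * γbar) * ‖u‖ ^ 2 := by
        intro u
        have := hA u
        simp only [hSapp, inner_sub_left, real_inner_smul_left,
          real_inner_self_eq_norm_sq]
        nlinarith
      have hSbd : ∀ u : H, ‖S u‖ ≤ (1 - t * γbar) * ‖u‖ :=
        selfadj_norm_bound S hsym (1 - t * γbar) (by linarith) h0 h1
      intro x y
      have heq : ((t * γ) • f x + (T x - t • A (T x))) -
          ((t * γ) • f y + (T y - t • A (T y)))
          = (t * γ) • (f x - f y) + S (T x - T y) := by
        simp only [hSapp, map_sub, smul_sub]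
        abel
      rw [heq]
      have hb1 : ‖(t * γ) • (f x - f y)‖ ≤ t * γ * (α * ‖x - y‖) := by
        rw [norm_smul, Real.norm_eq_abs, abs_of_nonneg (by positivity)]
        exact mul_le_mul_of_nonneg_left (hf x y) (by positivity)
      have hb2 : ‖S (T x - T y)‖ ≤ (1 - t * γbar) * ‖x - y‖ := by
        calc ‖S (T x - T y)‖ ≤ (1 - t * γbar) * ‖T x - T y‖ := hSbd _
        _ ≤ (1 - t * γbar) * ‖x - y‖ :=
          mul_le_mul_of_nonneg_left (hT x y) (by linarith)
      have hcge : 1 - t * (γbar - γ * α) ≤ c := le_max_right _ _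
      calc ‖(t * γ) • (f x - f y) + S (T x - T y)‖
          ≤ ‖(t * γ) • (f x - f y)‖ + ‖S (T x - T y)‖ := norm_add_le _ _
        _ ≤ t * γ * (α * ‖x - y‖) + (1 - t * γbar) * ‖x - y‖ := by linarith
        _ = (1 - t * (γbar - γ * α)) * ‖x - y‖ := by ring
        _ ≤ c * ‖x - y‖ := mul_le_mul_of_nonneg_right hcge (norm_nonneg _)
  refine ⟨⟨c, hc0, hc1, key⟩, ?_⟩
  set F : H → H := fun x => (t * γ) • f x + (T x - t • A (T x)) with hF
  have hlip : LipschitzWith c.toNNReal F := by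
    apply LipschitzWith.of_dist_le_mul
    intro x y
    rw [dist_eq_norm, dist_eq_norm, Real.coe_toNNReal c hc0]
    exact key x y
  have hcontr : ContractingWith c.toNNReal F := by
    refine ⟨?_, hlip⟩
    rw [← NNReal.coe_lt_coe, Real.coe_toNNReal c hc0]
    exact hc1
  obtain ⟨x, hx, -⟩ := hcontr.exists_fixedPoint (0 : H) (edist_ne_top _ _)
  refine ⟨x, hx, ?_⟩
  intro y hy
  have hx' : (t * γ) • f x + (T x - t • A (T x)) = x := hx
  have := key y x
  rw [hy, hx'] at this
  have hn : ‖y - x‖ ≤ 0 := by nlinarith [norm_nonneg (y - x)]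
  have : y - x = 0 := norm_le_zero_iff.mp hn
  exact sub_eq_zero.mp this
end

section
/- With the W_n-mapping construction, F(W_n) = ⋂_{i=1}^n F(T_i) for each n ≥ 1, provided ⋂_{i=1}^∞ F(T_i) ≠ ∅ and 0 < γ_i ≤ γ < 1 for all i. -/
open scoped RealInnerProductSpace
open Filter

/-- `Uaux T g n m` is the Shimoji–Takahashi mapping `U_{n, n+1-m}`, so that
`Uaux T g n 0 = U_{n,n+1} = id` and `Uaux T g n n = U_{n,1} = W_n`. -/
def Uaux {H : Type*} [NormedAddCommGroup H] [InnerProductSpace ℝ H]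
    (T : ℕ → H → H) (g : ℕ → ℝ) (n : ℕ) : ℕ → H → H
  | 0 => id
  | (m + 1) => fun x => g (n - m) • T (n - m) (Uaux T g n m x) + (1 - g (n - m)) • x

/-- The `W_n`-mapping generated by `T₁, T₂, …` and `γ₁, γ₂, …`. -/
def Wmap {H : Type*} [NormedAddCommGroup H] [InnerProductSpace ℝ H]
    (T : ℕ → H → H) (g : ℕ → ℝ) (n : ℕ) : H → H :=
  Uaux T g n n

/-- Hilbert space convex-combination identity. -/
lemma combo_norm_sq {H : Type*} [NormedAddCommGroup H] [InnerProductSpace ℝ H]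
    (t : ℝ) (a b : H) :
    ‖t • a + (1 - t) • b‖ ^ 2
      = t * ‖a‖ ^ 2 + (1 - t) * ‖b‖ ^ 2 - t * (1 - t) * ‖a - b‖ ^ 2 := by
  have h : ∀ v : H, ‖v‖ ^ 2 = ⟪v, v⟫ := fun v => (real_inner_self_eq_norm_sq v).symm
  rw [h, h, h, h]
  simp only [inner_add_left, inner_add_right, inner_sub_left, inner_sub_right,
    real_inner_smul_left, real_inner_smul_right, real_inner_comm a b]
  ring

theorem stmt_8 {H : Type*} [NormedAddCommGroup H] [InnerProductSpace ℝ H]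
    [CompleteSpace H] (C : Set H) (hCne : C.Nonempty) (hCcl : IsClosed C)
    (hCcv : Convex ℝ C)
    (T : ℕ → H → H) (hTmaps : ∀ i ≥ 1, Set.MapsTo (T i) C C)
    (hTne : ∀ i ≥ 1, ∀ x ∈ C, ∀ y ∈ C, ‖T i x - T i y‖ ≤ ‖x - y‖)
    (hF : ∃ p ∈ C, ∀ i ≥ 1, T i p = p)
    (g : ℕ → ℝ) (γ : ℝ) (hγ : γ < 1)
    (hg : ∀ i ≥ 1, 0 < g i ∧ g i ≤ γ) :
    ∀ n ≥ 1, {x ∈ C | Wmap T g n x = x} =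
      {x ∈ C | ∀ i, 1 ≤ i → i ≤ n → T i x = x} := by
  obtain ⟨p, hpC, hp⟩ := hF
  intro n hn
  ext x
  simp only [Set.mem_setOf_eq]
  constructor
  · rintro ⟨hxC, hx⟩
    refine ⟨hxC, ?_⟩
    have hx' : Uaux T g n n x = x := hx
    -- membership of the iterates in C
    have memC : ∀ k ≤ n, Uaux T g n k x ∈ C := by
      intro k hk
      induction k with
      | zero => exact hxC
      | succ m ih =>
        have h1 : 1 ≤ n - m := by omega
        have hgm := hg (n - m) h1
        show g (n - m) • T (n - m) (Uaux T g n m x) + (1 - g (n - m)) • x ∈ C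
        exact hCcv (hTmaps (n - m) h1 (ih (by omega))) hxC (le_of_lt hgm.1)
          (by linarith [hgm.2]) (by ring)
    -- the iterates do not increase the distance to p
    have bound : ∀ k ≤ n, ‖Uaux T g n k x - p‖ ≤ ‖x - p‖ := by
      intro k hk
      induction k with
      | zero => exact le_refl _
      | succ m ih =>
        have h1 : 1 ≤ n - m := by omega
        have hgm := hg (n - m) h1
        have hg1 : g (n - m) < 1 := lt_of_le_of_lt hgm.2 hγ
        have hTle : ‖T (n - m) (Uaux T g n m x) - p‖ ≤ ‖Uaux T g n m x - p‖ := by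
          have := hTne (n - m) h1 (Uaux T g n m x) (memC m (by omega)) p hpC
          rwa [hp (n - m) h1] at this
        have hrw : Uaux T g n (m + 1) x - p
            = g (n - m) • (T (n - m) (Uaux T g n m x) - p) + (1 - g (n - m)) • (x - p) := by
          show g (n - m) • T (n - m) (Uaux T g n m x) + (1 - g (n - m)) • x - p = _
          module
        rw [hrw]
        calc ‖g (n - m) • (T (n - m) (Uaux T g n m x) - p) + (1 - g (n - m)) • (x - p)‖
            ≤ ‖g (n - m) • (T (n - m) (Uaux T g n m x) - p)‖ + ‖(1 - g (n - m)) • (x - p)‖ :=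
              norm_add_le _ _
          _ = g (n - m) * ‖T (n - m) (Uaux T g n m x) - p‖ + (1 - g (n - m)) * ‖x - p‖ := by
              rw [norm_smul, norm_smul, Real.norm_eq_abs, Real.norm_eq_abs,
                abs_of_pos hgm.1, abs_of_pos (by linarith)]
          _ ≤ ‖x - p‖ := by nlinarith [ih (by omega), norm_nonneg (x - p)]
    -- downward induction: distances equal and fixed-point equations
    have down : ∀ j ≤ n, ‖Uaux T g n (n - j) x - p‖ = ‖x - p‖ ∧
        (1 ≤ j → T j (Uaux T g n (n - j) x) = x) := by
      intro j hj
      induction j with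
      | zero =>
        refine ⟨?_, by omega⟩
        rw [Nat.sub_zero, hx']
      | succ j ih =>
        obtain ⟨ihe, -⟩ := ih (by omega)
        have hsj : n - j = (n - (j + 1)) + 1 := by omega
        have hidx : n - (n - (j + 1)) = j + 1 := by omega
        have hgj := hg (j + 1) (by omega)
        have hg1 : g (j + 1) < 1 := lt_of_le_of_lt hgj.2 hγ
        set u := Uaux T g n (n - (j + 1)) x with hu
        have huC : u ∈ C := memC _ (by omega)
        have hub : ‖u - p‖ ≤ ‖x - p‖ := bound _ (by omega)
        have hTle : ‖T (j + 1) u - p‖ ≤ ‖u - p‖ := by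
          have := hTne (j + 1) (by omega) u huC p hpC
          rwa [hp (j + 1) (by omega)] at this
        have hunfold : Uaux T g n (n - j) x
            = g (j + 1) • T (j + 1) u + (1 - g (j + 1)) • x := by
          rw [hsj]
          show g (n - (n - (j+1))) • T (n - (n - (j+1))) u + (1 - g (n - (n - (j+1)))) • x = _
          rw [hidx]
        have hrw : Uaux T g n (n - j) x - p
            = g (j + 1) • (T (j + 1) u - p) + (1 - g (j + 1)) • (x - p) := by
          rw [hunfold]; module
        rw [hrw] at ihe
        set a := T (j + 1) u - p with ha
        set b := x - p with hb
        have hcombo := combo_norm_sq (g (j + 1)) a b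
        have hsq : ‖g (j + 1) • a + (1 - g (j + 1)) • b‖ ^ 2 = ‖b‖ ^ 2 := by rw [ihe]
        have hab2 : ‖a‖ ≤ ‖b‖ := le_trans hTle hub
        have habe : a = b := by
          have hsqle : ‖a‖ ^ 2 ≤ ‖b‖ ^ 2 := by
            nlinarith [norm_nonneg a, norm_nonneg b]
          have hsqz : ‖a - b‖ ^ 2 ≤ 0 := by
            nlinarith [mul_pos hgj.1 (show (0:ℝ) < 1 - g (j + 1) by linarith)]
          have hzero : ‖a - b‖ = 0 :=
            le_antisymm (by nlinarith [norm_nonneg (a - b)]) (norm_nonneg _)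
          exact sub_eq_zero.mp (norm_eq_zero.mp hzero)
        have hTfix : T (j + 1) u = x := by
          have : T (j + 1) u - p = x - p := habe
          have := sub_left_injective this
          exact this
        have hnorm : ‖u - p‖ = ‖x - p‖ := by
          have h1 : ‖x - p‖ ≤ ‖u - p‖ := by
            calc ‖x - p‖ = ‖a‖ := by rw [habe]
              _ ≤ ‖u - p‖ := hTle
          exact le_antisymm hub h1
        exact ⟨hnorm, fun _ => hTfix⟩
    -- upward induction: every iterate equals x
    have ux : ∀ k ≤ n, Uaux T g n k x = x := by
      intro k hk
      induction k with
      | zero => rfl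
      | succ m ih =>
        have h1 : 1 ≤ n - m := by omega
        have hidx : n - (n - m) = m := by omega
        have hT := (down (n - m) (by omega)).2 h1
        rw [hidx] at hT
        show g (n - m) • T (n - m) (Uaux T g n m x) + (1 - g (n - m)) • x = x
        rw [hT, ← add_smul]
        simp
    intro i hi1 hin
    have hT := (down i hin).2 hi1
    rw [ux (n - i) (by omega)] at hT
    exact hT
  · rintro ⟨hxC, hx⟩
    refine ⟨hxC, ?_⟩
    have key : ∀ k ≤ n, Uaux T g n k x = x := by
      intro k hk
      induction k with
      | zero => rfl
      | succ m ih =>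
        have h1 : 1 ≤ n - m := by omega
        have h2 : n - m ≤ n := by omega
        show g (n - m) • T (n - m) (Uaux T g n m x) + (1 - g (n - m)) • x = x
        rw [ih (by omega), hx (n - m) h1 h2, ← add_smul]
        simp
    exact key n le_rfl
end

section
/- With the W_n-mapping construction (0 < γ_i ≤ γ < 1), for each x ∈ C and each positive integer k, the limit lim_{n→∞} U_{n,k} x exists. -/
open scoped RealInnerProductSpace
open Filter

lemma Uaux_mem {H : Type*} [NormedAddCommGroup H] [InnerProductSpace ℝ H]
    (C : Set H) (hCcv : Convex ℝ C)
    (T : ℕ → H → H) (hTmaps : ∀ i ≥ 1, Set.MapsTo (T i) C C)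
    (g : ℕ → ℝ) (γ : ℝ) (hγ : γ < 1)
    (hg : ∀ i ≥ 1, 0 < g i ∧ g i ≤ γ)
    (x : H) (hx : x ∈ C) : ∀ n m, m ≤ n → Uaux T g n m x ∈ C := by
  intro n m
  induction m with
  | zero => intro _; exact hx
  | succ m ih =>
    intro hmn
    have hm : m ≤ n := Nat.le_of_succ_le hmn
    have h1 : 1 ≤ n - m := by omega
    have hgi := hg (n - m) h1
    have hTin : T (n - m) (Uaux T g n m x) ∈ C := hTmaps (n - m) h1 (ih hm)
    show g (n - m) • T (n - m) (Uaux T g n m x) + (1 - g (n - m)) • x ∈ C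
    exact hCcv hTin hx (le_of_lt hgi.1) (by linarith [hgi.2]) (by ring)

lemma Uaux_diff {H : Type*} [NormedAddCommGroup H] [InnerProductSpace ℝ H]
    (C : Set H) (hCcv : Convex ℝ C)
    (T : ℕ → H → H) (hTmaps : ∀ i ≥ 1, Set.MapsTo (T i) C C)
    (hTne : ∀ i ≥ 1, ∀ x ∈ C, ∀ y ∈ C, ‖T i x - T i y‖ ≤ ‖x - y‖)
    (p : H) (hp : p ∈ C) (hpfix : ∀ i ≥ 1, T i p = p)
    (g : ℕ → ℝ) (γ : ℝ) (hγ : γ < 1)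
    (hg : ∀ i ≥ 1, 0 < g i ∧ g i ≤ γ)
    (x : H) (hx : x ∈ C) :
    ∀ n m, m ≤ n →
      ‖Uaux T g (n + 1) (m + 1) x - Uaux T g n m x‖ ≤ γ ^ m * (2 * γ * ‖x - p‖) := by
  intro n m
  induction m with
  | zero =>
    intro _
    have h1 : (1:ℕ) ≤ n + 1 := by omega
    have hgi := hg (n + 1) h1
    have hsub : n + 1 - 0 = n + 1 := rfl
    have : Uaux T g (n + 1) 1 x - Uaux T g n 0 x
        = g (n + 1) • (T (n + 1) x - x) := by
      show (g (n+1) • T (n+1) (Uaux T g (n+1) 0 x) + (1 - g (n+1)) • x) - x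
          = g (n + 1) • (T (n + 1) x - x)
      show (g (n+1) • T (n+1) x + (1 - g (n+1)) • x) - x = _
      rw [smul_sub, sub_smul, one_smul]
      abel
    rw [this, norm_smul, Real.norm_eq_abs, abs_of_pos hgi.1]
    have hb : ‖T (n + 1) x - x‖ ≤ 2 * ‖x - p‖ := by
      have h2 : ‖T (n+1) x - T (n+1) p‖ ≤ ‖x - p‖ := hTne (n+1) h1 x hx p hp
      rw [hpfix (n+1) h1] at h2
      calc ‖T (n + 1) x - x‖ ≤ ‖T (n+1) x - p‖ + ‖p - x‖ := norm_sub_le_norm_sub_add_norm_sub _ _ _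
        _ ≤ ‖x - p‖ + ‖x - p‖ := by rw [norm_sub_rev p x]; linarith
        _ = 2 * ‖x - p‖ := by ring
    have hγ0 : (0:ℝ) < γ := lt_of_lt_of_le hgi.1 hgi.2
    calc g (n+1) * ‖T (n + 1) x - x‖ ≤ γ * (2 * ‖x - p‖) := by
          apply mul_le_mul hgi.2 hb (norm_nonneg _) (le_of_lt hγ0)
      _ = γ ^ 0 * (2 * γ * ‖x - p‖) := by ring
  | succ m ih =>
    intro hmn
    have hm : m ≤ n := Nat.le_of_succ_le hmn
    have h1 : 1 ≤ n - m := by omega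
    have hgi := hg (n - m) h1
    have hγ0 : (0:ℝ) < γ := lt_of_lt_of_le hgi.1 hgi.2
    have hA : Uaux T g (n+1) (m+1) x ∈ C :=
      Uaux_mem C hCcv T hTmaps g γ hγ hg x hx (n+1) (m+1) (by omega)
    have hB : Uaux T g n m x ∈ C :=
      Uaux_mem C hCcv T hTmaps g γ hγ hg x hx n m hm
    have hidx : (n + 1) - (m + 1) = n - m := by omega
    have hEq : Uaux T g (n + 1) (m + 1 + 1) x - Uaux T g n (m + 1) x
        = g (n - m) • (T (n - m) (Uaux T g (n+1) (m+1) x) - T (n - m) (Uaux T g n m x)) := by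
      show (g ((n+1) - (m+1)) • T ((n+1) - (m+1)) (Uaux T g (n+1) (m+1) x)
              + (1 - g ((n+1) - (m+1))) • x)
          - (g (n - m) • T (n - m) (Uaux T g n m x) + (1 - g (n - m)) • x) = _
      rw [hidx, smul_sub]
      abel
    rw [hEq, norm_smul, Real.norm_eq_abs, abs_of_pos hgi.1]
    have hne : ‖T (n - m) (Uaux T g (n+1) (m+1) x) - T (n - m) (Uaux T g n m x)‖
        ≤ ‖Uaux T g (n+1) (m+1) x - Uaux T g n m x‖ :=
      hTne (n - m) h1 _ hA _ hB
    have hih := ih hm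
    have hMnn : (0:ℝ) ≤ 2 * γ * ‖x - p‖ := by positivity
    calc g (n - m) * ‖T (n - m) (Uaux T g (n+1) (m+1) x) - T (n - m) (Uaux T g n m x)‖
        ≤ γ * (γ ^ m * (2 * γ * ‖x - p‖)) := by
          apply mul_le_mul hgi.2 (le_trans hne hih) (norm_nonneg _) (le_of_lt hγ0)
      _ = γ ^ (m + 1) * (2 * γ * ‖x - p‖) := by ring

theorem stmt_9 {H : Type*} [NormedAddCommGroup H] [InnerProductSpace ℝ H]
    [CompleteSpace H] (C : Set H) (hCne : C.Nonempty) (hCcl : IsClosed C)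
    (hCcv : Convex ℝ C)
    (T : ℕ → H → H) (hTmaps : ∀ i ≥ 1, Set.MapsTo (T i) C C)
    (hTne : ∀ i ≥ 1, ∀ x ∈ C, ∀ y ∈ C, ‖T i x - T i y‖ ≤ ‖x - y‖)
    (hF : ∃ p ∈ C, ∀ i ≥ 1, T i p = p)
    (g : ℕ → ℝ) (γ : ℝ) (hγ : γ < 1)
    (hg : ∀ i ≥ 1, 0 < g i ∧ g i ≤ γ) :
    ∀ x ∈ C, ∀ k ≥ 1,
      ∃ L : H, Tendsto (fun n => Uaux T g n (n + 1 - k) x) atTop (nhds L) := by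
  intro x hx k hk
  obtain ⟨p, hp, hpfix⟩ := hF
  have hγ0 : (0:ℝ) < γ := lt_of_lt_of_le (hg 1 le_rfl).1 (hg 1 le_rfl).2
  set M : ℝ := 2 * γ * ‖x - p‖ with hM
  have hM0 : 0 ≤ M := by positivity
  set Cc : ℝ := M * γ / γ ^ k with hCc
  have hCc0 : 0 ≤ Cc := by positivity
  have key : ∀ n, dist (Uaux T g n (n + 1 - k) x) (Uaux T g (n+1) (n + 2 - k) x)
      ≤ Cc * γ ^ n := by
    intro n
    by_cases hkn : k ≤ n + 1
    · have hm : n + 2 - k = (n + 1 - k) + 1 := by omega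
      rw [dist_eq_norm, norm_sub_rev, hm]
      have hb := Uaux_diff C hCcv T hTmaps hTne p hp hpfix g γ hγ hg x hx n (n + 1 - k)
        (by omega)
      refine hb.trans (le_of_eq ?_)
      rw [hCc]
      have : γ ^ (n + 1 - k) = γ ^ (n+1) / γ ^ k := by
        rw [eq_div_iff (by positivity), ← pow_add]
        congr 1
        omega
      rw [this]
      field_simp
      ring
    · have h1 : n + 1 - k = 0 := by omega
      have h2 : n + 2 - k = 0 := by omega
      rw [h1, h2, show Uaux T g n 0 x = x from rfl,
        show Uaux T g (n+1) 0 x = x from rfl, dist_self]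
      positivity
  have hcauchy : CauchySeq (fun n => Uaux T g n (n + 1 - k) x) :=
    cauchySeq_of_le_geometric γ Cc hγ key
  exact cauchySeq_tendsto_of_complete hcauchy
end

section
/- With the W_n-mapping construction (0 < γ_i ≤ γ < 1), for any bounded subset K of C, sup_{x ∈ K} ‖Wx − W_n x‖ → 0 as n → ∞, i.e. W_n converges to W uniformly on bounded subsets of C. -/
open scoped RealInnerProductSpace
open Filter

section Aux

variable {H : Type*} [NormedAddCommGroup H] [InnerProductSpace ℝ H]
    (C : Set H) (hCcv : Convex ℝ C)
    (T : ℕ → H → H) (hTmaps : ∀ i ≥ 1, Set.MapsTo (T i) C C)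
    (hTne : ∀ i ≥ 1, ∀ x ∈ C, ∀ y ∈ C, ‖T i x - T i y‖ ≤ ‖x - y‖)
    (g : ℕ → ℝ) (γ : ℝ) (hγ : γ < 1)
    (hg : ∀ i ≥ 1, 0 < g i ∧ g i ≤ γ)

include hCcv hTmaps hγ hg in
lemma Uaux_mem_s11 (n : ℕ) : ∀ m, m ≤ n → ∀ x ∈ C, Uaux T g n m x ∈ C := by
  intro m
  induction m with
  | zero => intro _ x hx; exact hx
  | succ m ih =>
    intro hm x hx
    have hm' : m ≤ n := Nat.le_of_succ_le hm
    have hidx : 1 ≤ n - m := by omega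
    obtain ⟨hg0, hg1⟩ := hg (n - m) hidx
    have hu := ih hm' x hx
    have hT := hTmaps (n - m) hidx hu
    show g (n - m) • T (n - m) (Uaux T g n m x) + (1 - g (n - m)) • x ∈ C
    exact hCcv hT hx hg0.le (by linarith) (by ring)

include hCcv hTmaps hTne hγ hg in
lemma Uaux_diff_s11 (n : ℕ) : ∀ m, m ≤ n → ∀ x ∈ C,
    ‖Uaux T g (n + 1) (m + 1) x - Uaux T g n m x‖
      ≤ γ ^ m * ‖Uaux T g (n + 1) 1 x - x‖ := by
  intro m
  induction m with
  | zero => intro _ x hx; simp [Uaux]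
  | succ m ih =>
    intro hm x hx
    have hm' : m ≤ n := Nat.le_of_succ_le hm
    have hidx : 1 ≤ n - m := by omega
    obtain ⟨hg0, hg1⟩ := hg (n - m) hidx
    have hγ0 : (0:ℝ) ≤ γ := le_trans hg0.le hg1
    have hu1 : Uaux T g (n + 1) (m + 1) x ∈ C :=
      Uaux_mem_s11 C hCcv T hTmaps g γ hγ hg (n + 1) (m + 1) (by omega) x hx
    have hu2 : Uaux T g n m x ∈ C :=
      Uaux_mem_s11 C hCcv T hTmaps g γ hγ hg n m hm' x hx
    have hidx' : (n + 1) - (m + 1) = n - m := by omega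
    have key : Uaux T g (n + 1) (m + 1 + 1) x - Uaux T g n (m + 1) x
        = g (n - m) • (T (n - m) (Uaux T g (n + 1) (m + 1) x)
            - T (n - m) (Uaux T g n m x)) := by
      show (g ((n+1) - (m+1)) • T ((n+1) - (m+1)) (Uaux T g (n+1) (m+1) x)
              + (1 - g ((n+1) - (m+1))) • x)
          - (g (n - m) • T (n - m) (Uaux T g n m x) + (1 - g (n - m)) • x) = _
      rw [hidx', smul_sub]
      abel
    rw [key, norm_smul, Real.norm_eq_abs, abs_of_pos hg0]
    calc g (n - m) * ‖T (n - m) (Uaux T g (n + 1) (m + 1) x)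
            - T (n - m) (Uaux T g n m x)‖
        ≤ γ * ‖Uaux T g (n + 1) (m + 1) x - Uaux T g n m x‖ := by
          apply mul_le_mul hg1 (hTne (n - m) hidx _ hu1 _ hu2) (norm_nonneg _) hγ0
      _ ≤ γ * (γ ^ m * ‖Uaux T g (n + 1) 1 x - x‖) :=
          mul_le_mul_of_nonneg_left (ih hm' x hx) hγ0
      _ = γ ^ (m + 1) * ‖Uaux T g (n + 1) 1 x - x‖ := by ring

end Aux

theorem stmt_11 {H : Type*} [NormedAddCommGroup H] [InnerProductSpace ℝ H]
    [CompleteSpace H] (C : Set H) (hCne : C.Nonempty) (hCcl : IsClosed C)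
    (hCcv : Convex ℝ C)
    (T : ℕ → H → H) (hTmaps : ∀ i ≥ 1, Set.MapsTo (T i) C C)
    (hTne : ∀ i ≥ 1, ∀ x ∈ C, ∀ y ∈ C, ‖T i x - T i y‖ ≤ ‖x - y‖)
    (hF : ∃ p ∈ C, ∀ i ≥ 1, T i p = p)
    (g : ℕ → ℝ) (γ : ℝ) (hγ : γ < 1)
    (hg : ∀ i ≥ 1, 0 < g i ∧ g i ≤ γ)
    (W : H → H) (hW : ∀ x ∈ C, Tendsto (fun n => Wmap T g n x) atTop (nhds (W x)))
    (K : Set H) (hKC : K ⊆ C) (hK : Bornology.IsBounded K) :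
    Tendsto (fun n => ⨆ x : K, ‖W x - Wmap T g n x‖) atTop (nhds 0) := by
  obtain ⟨p, hpC, hp⟩ := hF
  obtain ⟨R, hR⟩ := isBounded_iff_forall_norm_le.mp hK
  obtain ⟨D, hD0, hxp⟩ : ∃ D : ℝ, 0 ≤ D ∧ ∀ x ∈ K, ‖x - p‖ ≤ D := by
    refine ⟨max R 0 + ‖p‖, add_nonneg (le_max_right _ _) (norm_nonneg _), ?_⟩
    intro x hx
    calc ‖x - p‖ ≤ ‖x‖ + ‖p‖ := norm_sub_le _ _
      _ ≤ max R 0 + ‖p‖ := by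
          gcongr; exact le_trans (hR x hx) (le_max_left _ _)
  have hγ0 : (0:ℝ) ≤ γ := le_trans (hg 1 le_rfl).1.le (hg 1 le_rfl).2
  have h1γ : (0:ℝ) < 1 - γ := by linarith
  -- one-step bound
  have step : ∀ x ∈ K, ∀ m : ℕ,
      ‖Wmap T g (m + 1) x - Wmap T g m x‖ ≤ 2 * D * γ ^ (m + 1) := by
    intro x hx m
    have hxC := hKC hx
    have h1 : ‖Wmap T g (m + 1) x - Wmap T g m x‖
        ≤ γ ^ m * ‖Uaux T g (m + 1) 1 x - x‖ :=
      Uaux_diff_s11 C hCcv T hTmaps hTne g γ hγ hg m m le_rfl x hxC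
    have h2 : ‖Uaux T g (m + 1) 1 x - x‖ ≤ γ * (2 * D) := by
      have hidx : 1 ≤ m + 1 := by omega
      obtain ⟨hg0, hg1⟩ := hg (m + 1) hidx
      have hm1 : (m + 1) - 0 = m + 1 := rfl
      have key : Uaux T g (m + 1) 1 x - x = g (m + 1) • (T (m + 1) x - x) := by
        show (g ((m+1) - 0) • T ((m+1) - 0) (Uaux T g (m+1) 0 x)
                + (1 - g ((m+1) - 0)) • x) - x = _
        rw [hm1, smul_sub]
        show g (m+1) • T (m+1) x + (1 - g (m+1)) • x - x = _
        rw [sub_smul, one_smul]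
        abel
      rw [key, norm_smul, Real.norm_eq_abs, abs_of_pos hg0]
      have hTx : ‖T (m + 1) x - x‖ ≤ 2 * D := by
        calc ‖T (m + 1) x - x‖ ≤ ‖T (m + 1) x - p‖ + ‖p - x‖ := norm_sub_le_norm_sub_add_norm_sub _ _ _
          _ = ‖T (m + 1) x - T (m + 1) p‖ + ‖p - x‖ := by rw [hp (m + 1) hidx]
          _ ≤ ‖x - p‖ + ‖p - x‖ := by
              gcongr
              exact hTne (m + 1) hidx x hxC p hpC
          _ = ‖x - p‖ + ‖x - p‖ := by rw [norm_sub_rev p x]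
          _ ≤ 2 * D := by linarith [hxp x hx]
      exact mul_le_mul hg1 hTx (norm_nonneg _) hγ0
    have h3 : ‖Wmap T g (m + 1) x - Wmap T g m x‖ ≤ γ ^ m * (γ * (2 * D)) :=
      le_trans h1 (mul_le_mul_of_nonneg_left h2 (pow_nonneg hγ0 m))
    calc ‖Wmap T g (m + 1) x - Wmap T g m x‖ ≤ γ ^ m * (γ * (2 * D)) := h3
      _ = 2 * D * γ ^ (m + 1) := by ring
  -- telescoping bound
  have tele : ∀ x ∈ K, ∀ n k : ℕ,
      ‖Wmap T g (n + k) x - Wmap T g n x‖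
        ≤ 2 * D / (1 - γ) * (γ ^ (n + 1) - γ ^ (n + k + 1)) := by
    intro x hx n k
    induction k with
    | zero => simp
    | succ k ih =>
      have h1 : ‖Wmap T g (n + (k + 1)) x - Wmap T g n x‖
          ≤ ‖Wmap T g (n + k + 1) x - Wmap T g (n + k) x‖
            + ‖Wmap T g (n + k) x - Wmap T g n x‖ := by
        rw [show n + (k + 1) = n + k + 1 by omega]
        exact norm_sub_le_norm_sub_add_norm_sub _ _ _
      have h2 := step x hx (n + k)
      have hne : (1 : ℝ) - γ ≠ 0 := ne_of_gt h1γ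
      have hEq : 2 * D * γ ^ (n + k + 1)
          + 2 * D / (1 - γ) * (γ ^ (n + 1) - γ ^ (n + k + 1))
          = 2 * D / (1 - γ) * (γ ^ (n + 1) - γ ^ (n + k + 1) * γ) := by
        field_simp
        ring
      calc ‖Wmap T g (n + (k + 1)) x - Wmap T g n x‖
          ≤ 2 * D * γ ^ (n + k + 1)
            + 2 * D / (1 - γ) * (γ ^ (n + 1) - γ ^ (n + k + 1)) := by
            linarith [h1, h2, ih]
        _ = 2 * D / (1 - γ) * (γ ^ (n + 1) - γ ^ (n + (k + 1) + 1)) := by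
            rw [show n + (k + 1) + 1 = (n + k + 1) + 1 by omega, pow_succ]
            exact hEq
  -- limit bound
  have lim_bound : ∀ x ∈ K, ∀ n : ℕ,
      ‖W x - Wmap T g n x‖ ≤ 2 * D / (1 - γ) * γ ^ (n + 1) := by
    intro x hx n
    have hxC := hKC hx
    have htend : Tendsto (fun N => ‖Wmap T g N x - Wmap T g n x‖) atTop
        (nhds ‖W x - Wmap T g n x‖) :=
      ((hW x hxC).sub tendsto_const_nhds).norm
    refine le_of_tendsto htend ?_
    filter_upwards [eventually_ge_atTop n] with N hN
    obtain ⟨k, rfl⟩ := Nat.exists_eq_add_of_le hN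
    calc ‖Wmap T g (n + k) x - Wmap T g n x‖
        ≤ 2 * D / (1 - γ) * (γ ^ (n + 1) - γ ^ (n + k + 1)) := tele x hx n k
      _ ≤ 2 * D / (1 - γ) * γ ^ (n + 1) := by
          apply mul_le_mul_of_nonneg_left _ (by positivity)
          have : 0 ≤ γ ^ (n + k + 1) := pow_nonneg hγ0 _
          linarith
  -- squeeze
  have hbound_nonneg : ∀ n : ℕ, (0:ℝ) ≤ 2 * D / (1 - γ) * γ ^ (n + 1) := by
    intro n; positivity
  have hub : ∀ n : ℕ, (⨆ x : K, ‖W x - Wmap T g n x‖)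
      ≤ 2 * D / (1 - γ) * γ ^ (n + 1) := by
    intro n
    exact Real.iSup_le (fun x => lim_bound x x.2 n) (hbound_nonneg n)
  have hlb : ∀ n : ℕ, (0:ℝ) ≤ ⨆ x : K, ‖W x - Wmap T g n x‖ := by
    intro n
    exact Real.iSup_nonneg fun x => norm_nonneg _
  have htend0 : Tendsto (fun n : ℕ => 2 * D / (1 - γ) * γ ^ (n + 1)) atTop (nhds 0) := by
    have h := tendsto_pow_atTop_nhds_zero_of_lt_one hγ0 hγ
    have h2 : Tendsto (fun n : ℕ => 2 * D / (1 - γ) * γ * γ ^ n) atTop (nhds 0) := by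
      simpa using h.const_mul (2 * D / (1 - γ) * γ)
    refine h2.congr fun n => by ring
  exact squeeze_zero hlb hub htend0
end

section
/- For the W_n-mappings and any point x in C, ‖W_n x − W_{n−1} x‖ ≤ M · ∏_{i=1}^{n−1} γ_i, where M is any constant bounding ‖U_{n,n} x − U_{n−1,n} x‖ over n. -/
open scoped RealInnerProductSpace
open Filter

/-! Each `U_{n,k}` shrinks distances to the previous level by the factor `γ_k`, because
`T_k` is nonexpansive and the anchor `x` of the convex combination is the same on both
levels; iterating from `k = n` down to `k = 1` yields the product `γ₁ ⋯ γ_{n-1}`. -/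

theorem norm_smul_add_sub_smul_add_le {E : Type*} [NormedAddCommGroup E] [NormedSpace ℝ E]
    {S : E → E} {C : Set E} (hS : ∀ a ∈ C, ∀ b ∈ C, ‖S a - S b‖ ≤ ‖a - b‖)
    {t : ℝ} (ht : 0 ≤ t) (x : E) {a b : E} (ha : a ∈ C) (hb : b ∈ C) :
    ‖(t • S a + (1 - t) • x) - (t • S b + (1 - t) • x)‖ ≤ t * ‖a - b‖ := by
  rw [add_sub_add_right_eq_sub, ← smul_sub, norm_smul, Real.norm_of_nonneg ht]
  exact mul_le_mul_of_nonneg_left (hS a ha b hb) ht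

section Uaux

variable {H : Type*} [NormedAddCommGroup H] [InnerProductSpace ℝ H]
  {T : ℕ → H → H} {g : ℕ → ℝ} {C : Set H} {x : H}

theorem Uaux_succ_apply (n m : ℕ) (x : H) :
    Uaux T g n (m + 1) x = g (n - m) • T (n - m) (Uaux T g n m x) + (1 - g (n - m)) • x :=
  rfl

theorem Uaux_mem_s12 (hC : Convex ℝ C) (hT : ∀ i ≥ 1, Set.MapsTo (T i) C C)
    (hg : ∀ i ≥ 1, g i ∈ Set.Icc 0 1) (hx : x ∈ C) {n m : ℕ} (hm : m ≤ n) :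
    Uaux T g n m x ∈ C := by
  induction m with
  | zero => exact hx
  | succ m ih =>
    have hnm : 1 ≤ n - m := by omega
    obtain ⟨hg₀, hg₁⟩ := hg _ hnm
    exact hC (hT _ hnm (ih (by omega))) hx hg₀ (by linarith) (by ring)

theorem norm_Uaux_succ_sub_Uaux_le (hC : Convex ℝ C) (hT : ∀ i ≥ 1, Set.MapsTo (T i) C C)
    (hTne : ∀ i ≥ 1, ∀ a ∈ C, ∀ b ∈ C, ‖T i a - T i b‖ ≤ ‖a - b‖)
    (hg : ∀ i ≥ 1, g i ∈ Set.Icc 0 1) (hx : x ∈ C) {n m : ℕ} (hm : m ≤ n) :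
    ‖Uaux T g (n + 1) (m + 1) x - Uaux T g n m x‖ ≤
      ‖Uaux T g (n + 1) 1 x - x‖ * ∏ i ∈ Finset.Icc (n - m + 1) n, g i := by
  induction m with
  | zero => simp [Uaux]
  | succ m ih =>
    have hk : 1 ≤ n - m := by omega
    have hg₀ : 0 ≤ g (n - m) := (hg _ hk).1
    have hprod : ∏ i ∈ Finset.Icc (n - (m + 1) + 1) n, g i =
        g (n - m) * ∏ i ∈ Finset.Icc (n - m + 1) n, g i := by
      rw [show n - (m + 1) + 1 = n - m by omega, ← Finset.insert_Icc_add_one_left_eq_Icc (by omega),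
        Finset.prod_insert (by simp)]
    rw [Uaux_succ_apply (n + 1), Uaux_succ_apply n, Nat.add_sub_add_right, hprod]
    calc _ ≤ g (n - m) * ‖Uaux T g (n + 1) (m + 1) x - Uaux T g n m x‖ :=
          norm_smul_add_sub_smul_add_le (hTne _ hk) hg₀ x
            (Uaux_mem_s12 hC hT hg hx (by omega)) (Uaux_mem_s12 hC hT hg hx (by omega))
      _ ≤ g (n - m) * (‖Uaux T g (n + 1) 1 x - x‖ * ∏ i ∈ Finset.Icc (n - m + 1) n, g i) :=
          mul_le_mul_of_nonneg_left (ih (by omega)) hg₀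
      _ = _ := by ring

theorem norm_Wmap_succ_sub_Wmap_le (hC : Convex ℝ C) (hT : ∀ i ≥ 1, Set.MapsTo (T i) C C)
    (hTne : ∀ i ≥ 1, ∀ a ∈ C, ∀ b ∈ C, ‖T i a - T i b‖ ≤ ‖a - b‖)
    (hg : ∀ i ≥ 1, g i ∈ Set.Icc 0 1) (hx : x ∈ C) (n : ℕ) :
    ‖Wmap T g (n + 1) x - Wmap T g n x‖ ≤
      ‖Uaux T g (n + 1) 1 x - x‖ * ∏ i ∈ Finset.Icc 1 n, g i := by
  simpa [Wmap] using norm_Uaux_succ_sub_Uaux_le hC hT hTne hg hx le_rfl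

end Uaux

theorem stmt_12_general {H : Type*} [NormedAddCommGroup H] [InnerProductSpace ℝ H]
    (C : Set H)
    (hCcv : Convex ℝ C)
    (T : ℕ → H → H) (hTmaps : ∀ i ≥ 1, Set.MapsTo (T i) C C)
    (hTne : ∀ i ≥ 1, ∀ x ∈ C, ∀ y ∈ C, ‖T i x - T i y‖ ≤ ‖x - y‖)
    (g : ℕ → ℝ) (γ : ℝ) (hγ : γ < 1)
    (hg : ∀ i ≥ 1, 0 < g i ∧ g i ≤ γ)
    (x : H) (hx : x ∈ C)
    (M : ℝ) (hM : ∀ n ≥ 1, ‖Uaux T g n 1 x - x‖ ≤ M) :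
    ∀ n ≥ 1, ‖Wmap T g n x - Wmap T g (n - 1) x‖ ≤
      M * ∏ i ∈ Finset.Icc 1 (n - 1), g i := by
  intro _ hn
  obtain ⟨n, rfl⟩ := Nat.exists_eq_add_of_le' hn
  rw [Nat.add_sub_cancel]
  have hg01 : ∀ i ≥ 1, g i ∈ Set.Icc 0 1 := fun i hi =>
    ⟨(hg i hi).1.le, (hg i hi).2.trans hγ.le⟩
  have hprod : 0 ≤ ∏ i ∈ Finset.Icc 1 n, g i :=
    Finset.prod_nonneg fun i hi => (hg01 i (Finset.mem_Icc.1 hi).1).1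
  calc _ ≤ ‖Uaux T g (n + 1) 1 x - x‖ * ∏ i ∈ Finset.Icc 1 n, g i :=
        norm_Wmap_succ_sub_Wmap_le hCcv hTmaps hTne hg01 hx n
    _ ≤ M * ∏ i ∈ Finset.Icc 1 n, g i :=
        mul_le_mul_of_nonneg_right (hM (n + 1) (Nat.le_add_left 1 n)) hprod

theorem stmt_12 {H : Type*} [NormedAddCommGroup H] [InnerProductSpace ℝ H]
    [CompleteSpace H] (C : Set H) (hCne : C.Nonempty) (hCcl : IsClosed C)
    (hCcv : Convex ℝ C)
    (T : ℕ → H → H) (hTmaps : ∀ i ≥ 1, Set.MapsTo (T i) C C)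
    (hTne : ∀ i ≥ 1, ∀ x ∈ C, ∀ y ∈ C, ‖T i x - T i y‖ ≤ ‖x - y‖)
    (g : ℕ → ℝ) (γ : ℝ) (hγ : γ < 1)
    (hg : ∀ i ≥ 1, 0 < g i ∧ g i ≤ γ)
    (x : H) (hx : x ∈ C)
    (M : ℝ) (hM : ∀ n ≥ 1, ‖Uaux T g n 1 x - x‖ ≤ M) :
    ∀ n ≥ 1, ‖Wmap T g n x - Wmap T g (n - 1) x‖ ≤
      M * ∏ i ∈ Finset.Icc 1 (n - 1), g i :=
  stmt_12_general C hCcv T hTmaps hTne g γ hγ hg x hx M hM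
end

section
/- Let H be a Hilbert space, A a strongly positive bounded linear self-adjoint operator with coefficient γ̄ > 0, f an α-contraction, 0 < γ < γ̄/α, and T nonexpansive with F(T) ≠ ∅. For t ∈ (0, ‖A‖⁻¹) let x_t be the unique fixed point of x ↦ tγf(x) + (I − tA)Tx. Then x_t converges strongly as t → 0 to a fixed point x̄ of T that solves the variational inequality ⟨(A − γf)x̄, x̄ − z⟩ ≤ 0 for all z ∈ F(T). -/
/-!
Put β = γ̄ - γα > 0, so that A - γf is β-strongly monotone. Since ‖I - tA‖ ≤ 1 - tγ̄, the
equation defining x_t gives, for every z ∈ F(T), the estimate β‖x_t - z‖² ≤ ⟪(A - γf)z, z - x_t⟫;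
it bounds the net, and then ‖x_t - Tx_t‖ = O(t). Along any ultrafilter finer than 𝓝[>] 0 the
bounded net has a weak limit q, which lies in F(T) by demiclosedness of I - T, and the estimate
with z = q upgrades weak to strong convergence. As
⟪(A - γf)x_t, x_t - z⟫ ≤ ⟪A(x_t - Tx_t), x_t - z⟫ → 0, the limit q solves the variational
inequality, whose solution is unique by strong monotonicity; so all ultrafilter limits agree.
-/

open scoped RealInnerProductSpace
open Filter Topology

section Viscosity

variable {H : Type*} [NormedAddCommGroup H] [InnerProductSpace ℝ H] {A : H →L[ℝ] H}
  {F T f : H → H} {β γbar α γ t : ℝ} {x z : H}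

lemma ContinuousLinearMap.norm_le_of_abs_inner_self_le {B : H →L[ℝ] H}
    (hB : (B : H →ₗ[ℝ] H).IsSymmetric) {c : ℝ} (hc : 0 ≤ c)
    (h : ∀ x, |⟪B x, x⟫| ≤ c * ‖x‖ ^ 2) : ‖B‖ ≤ c := by
  rw [B.norm_eq_iSup_rayleighQuotient hB]
  refine ciSup_le fun x => ?_
  rcases eq_or_ne x 0 with rfl | hx
  · simpa using hc
  · rw [ContinuousLinearMap.rayleighQuotient, ContinuousLinearMap.reApplyInnerSelf_apply,
      abs_div, abs_sq, div_le_iff₀ (by positivity)]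
    exact h x

lemma le_opNorm_of_le_inner_self [Nontrivial H] {c : ℝ}
    (hA : ∀ x, c * ‖x‖ ^ 2 ≤ ⟪A x, x⟫) : c ≤ ‖A‖ := by
  obtain ⟨x, hx⟩ := exists_ne (0 : H)
  have hx : 0 < ‖x‖ ^ 2 := by positivity
  refine le_of_mul_le_mul_right ?_ hx
  calc c * ‖x‖ ^ 2 ≤ ⟪A x, x⟫ := hA x
    _ ≤ ‖A x‖ * ‖x‖ := real_inner_le_norm _ _
    _ ≤ ‖A‖ * ‖x‖ * ‖x‖ := by gcongr; exact A.le_opNorm x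
    _ = ‖A‖ * ‖x‖ ^ 2 := by ring

lemma norm_sub_smul_apply_le [Nontrivial H] (hsa : (A : H →ₗ[ℝ] H).IsSymmetric)
    (hA : ∀ x, γbar * ‖x‖ ^ 2 ≤ ⟪A x, x⟫) (ht : 0 ≤ t) (htA : t * ‖A‖ ≤ 1) (x : H) :
    ‖x - t • A x‖ ≤ (1 - t * γbar) * ‖x‖ := by
  set B : H →L[ℝ] H := 1 - t • A
  have hB : (B : H →ₗ[ℝ] H).IsSymmetric := fun x y => by
    simpa [B, inner_sub_left, inner_sub_right, real_inner_smul_left, real_inner_smul_right]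
      using Or.inl (hsa x y)
  have hγA : γbar ≤ ‖A‖ := le_opNorm_of_le_inner_self hA
  have hBx : ∀ x, |⟪B x, x⟫| ≤ (1 - t * γbar) * ‖x‖ ^ 2 := fun x => by
    have hup : ⟪A x, x⟫ ≤ ‖A‖ * ‖x‖ ^ 2 :=
      (real_inner_le_norm _ _).trans (by nlinarith [A.le_opNorm x, norm_nonneg x])
    have : ⟪B x, x⟫ = ‖x‖ ^ 2 - t * ⟪A x, x⟫ := by
      simp [B, inner_sub_left, real_inner_smul_left]
    rw [this, abs_le]
    constructor <;> nlinarith [mul_le_mul_of_nonneg_left (hA x) ht,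
      mul_le_mul_of_nonneg_left hup ht, sq_nonneg ‖x‖]
  have hc : 0 ≤ 1 - t * γbar := by nlinarith
  simpa [B] using B.le_of_opNorm_le (B.norm_le_of_abs_inner_self_le hB hc hBx) x

lemma inner_sub_apply_sub_nonneg (hT : ∀ u v, ‖T u - T v‖ ≤ ‖u - v‖) {z : H} (hz : T z = z)
    (x : H) : 0 ≤ ⟪x - T x, x - z⟫ := by
  have h1 : ‖T x - z‖ ≤ ‖x - z‖ := by simpa [hz] using hT x z
  have h2 := real_inner_le_norm (T x - z) (x - z)
  rw [show x - T x = (x - z) - (T x - z) by abel, inner_sub_left, real_inner_self_eq_norm_sq]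
  nlinarith [norm_nonneg (x - z)]

lemma eq_of_weak_tendsto_of_tendsto_sub_apply (hT : ∀ u v, ‖T u - T v‖ ≤ ‖u - v‖) {ι : Type*}
    {l : Filter ι} [l.NeBot] {x : ι → H} {q : H} {M : ℝ} (hx : ∀ᶠ i in l, ‖x i‖ ≤ M)
    (hweak : ∀ y, Tendsto (fun i => ⟪y, x i⟫) l (𝓝 ⟪y, q⟫))
    (hres : Tendsto (fun i => x i - T (x i)) l (𝓝 0)) : T q = q := by
  set d := q - T q
  set e := fun i => ‖x i - T (x i)‖
  have hbound : ∀ᶠ i in l, ‖d‖ ^ 2 ≤ e i * (e i + 2 * (M + ‖q‖)) - 2 * (⟪d, x i⟫ - ⟪d, q⟫) := by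
    filter_upwards [hx] with i hi
    have hi : ‖x i - q‖ ≤ M + ‖q‖ := (norm_sub_le _ _).trans (by gcongr)
    have h1 : ‖x i - T q‖ ≤ e i + ‖x i - q‖ :=
      calc ‖x i - T q‖ = ‖(x i - T (x i)) + (T (x i) - T q)‖ := by rw [sub_add_sub_cancel]
        _ ≤ e i + ‖x i - q‖ := (norm_add_le _ _).trans (by gcongr; exact hT _ _)
    have h2 : ‖x i - T q‖ ^ 2 = ‖x i - q‖ ^ 2 + 2 * (⟪d, x i⟫ - ⟪d, q⟫) + ‖d‖ ^ 2 := by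
      rw [show x i - T q = (x i - q) + d from (sub_add_sub_cancel _ _ _).symm, norm_add_sq_real,
        real_inner_comm, inner_sub_right]
    have he : 0 ≤ e i := norm_nonneg _
    nlinarith [mul_le_mul h1 h1 (norm_nonneg _) (by positivity),
      mul_le_mul_of_nonneg_left hi he]
  have hlim : Tendsto (fun i => e i * (e i + 2 * (M + ‖q‖)) - 2 * (⟪d, x i⟫ - ⟪d, q⟫)) l
      (𝓝 0) := by
    have he : Tendsto e l (𝓝 0) := by simpa using hres.norm
    simpa using (he.mul (he.add_const _)).sub (((hweak d).sub_const ⟪d, q⟫).const_mul 2)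
  have hd : ‖d‖ ^ 2 ≤ 0 := ge_of_tendsto hlim hbound
  have : d = 0 := by simpa using hd
  exact (sub_eq_zero.mp this).symm

lemma norm_sub_le_div_of_mul_sq_le_inner {y w : H} (hβ : 0 < β)
    (h : β * ‖y - z‖ ^ 2 ≤ ⟪w, z - y⟫) : ‖y - z‖ ≤ ‖w‖ / β := by
  rw [le_div_iff₀ hβ]
  have := h.trans ((real_inner_le_norm w (z - y)).trans_eq (by rw [norm_sub_rev]))
  nlinarith [norm_nonneg (y - z), norm_nonneg w]

lemma tendsto_of_weak_tendsto_of_mul_sq_le_inner {ι : Type*} {l : Filter ι} {x : ι → H}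
    {q w : H} (hβ : 0 < β) (h : ∀ᶠ i in l, β * ‖x i - q‖ ^ 2 ≤ ⟪w, q - x i⟫)
    (hweak : Tendsto (fun i => ⟪w, x i⟫) l (𝓝 ⟪w, q⟫)) : Tendsto x l (𝓝 q) := by
  have hsq : Tendsto (fun i => ‖x i - q‖ ^ 2) l (𝓝 0) := by
    have hlim : Tendsto (fun i => ⟪w, q - x i⟫ / β) l (𝓝 0) := by
      simpa [inner_sub_right] using ((hweak.const_sub ⟪w, q⟫).div_const β)
    refine squeeze_zero' (Eventually.of_forall fun i => sq_nonneg _) ?_ hlim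
    filter_upwards [h] with i hi
    rwa [le_div_iff₀ hβ, mul_comm]
  rw [tendsto_iff_norm_sub_tendsto_zero]
  simpa [Function.comp_def, Real.sqrt_sq (norm_nonneg _)]
    using (Real.continuous_sqrt.tendsto 0).comp hsq

lemma exists_tendsto_inner_of_ultrafilter [CompleteSpace H] {ι : Type*} (𝒰 : Ultrafilter ι)
    {x : ι → H} {M : ℝ} (hx : ∀ᶠ i in 𝒰, ‖x i‖ ≤ M) :
    ∃ q : H, ∀ y, Tendsto (fun i => ⟪y, x i⟫) 𝒰 (𝓝 ⟪y, q⟫) := by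
  -- Banach–Alaoglu in the dual, transported back to `H` by the Riesz isomorphism.
  let φ : ι → WeakDual ℝ H := fun i => StrongDual.toWeakDual (InnerProductSpace.toDual ℝ H (x i))
  have hball : (𝒰.map φ : Filter (WeakDual ℝ H)) ≤
      𝓟 (WeakDual.toStrongDual ⁻¹' Metric.closedBall 0 M) := by
    rw [Ultrafilter.coe_map, le_principal_iff, mem_map]
    filter_upwards [hx] with i hi
    simpa [φ] using hi
  obtain ⟨L, -, hL⟩ := (WeakDual.isCompact_closedBall 0 M).ultrafilter_le_nhds _ hball
  refine ⟨(InnerProductSpace.toDual ℝ H).symm (WeakDual.toStrongDual L), fun y => ?_⟩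
  rw [real_inner_comm, InnerProductSpace.toDual_symm_apply]
  have := ((WeakDual.eval_continuous y).tendsto L).comp hL
  simpa [φ, Function.comp_def, real_inner_comm] using this

lemma eq_of_variational_inequality {u v : H} (hF : ∀ u v, β * ‖u - v‖ ^ 2 ≤ ⟪F u - F v, u - v⟫)
    (hβ : 0 < β) (hu : ⟪F u, u - v⟫ ≤ 0) (hv : ⟪F v, v - u⟫ ≤ 0) : u = v := by
  have hsum : ⟪F u - F v, u - v⟫ = ⟪F u, u - v⟫ + ⟪F v, v - u⟫ := by
    rw [inner_sub_left, ← neg_sub u v, inner_neg_right]; ring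
  have : ‖u - v‖ ^ 2 ≤ 0 := by nlinarith [hF u v]
  simpa [sub_eq_zero] using this

lemma exists_fixedPoint_tendsto_of_ultrafilter [CompleteSpace H] (hF : Continuous F)
    (hT : ∀ u v, ‖T u - T v‖ ≤ ‖u - v‖) (hβ : 0 < β) {p : H} (hp : T p = p) {ι : Type*}
    (𝒰 : Ultrafilter ι) {x r : ι → H}
    (hkey : ∀ᶠ i in 𝒰, ∀ z, T z = z → β * ‖x i - z‖ ^ 2 ≤ ⟪F z, z - x i⟫)
    (hVI : ∀ᶠ i in 𝒰, ∀ z, T z = z → ⟪F (x i), x i - z⟫ ≤ ⟪r i, x i - z⟫)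
    (hr : Tendsto r 𝒰 (𝓝 0)) (hres : Tendsto (fun i => x i - T (x i)) 𝒰 (𝓝 0)) :
    ∃ q, T q = q ∧ Tendsto x 𝒰 (𝓝 q) ∧ ∀ z, T z = z → ⟪F q, q - z⟫ ≤ 0 := by
  have hbdd : ∀ᶠ i in 𝒰, ‖x i‖ ≤ ‖p‖ + ‖F p‖ / β := hkey.mono fun i hi =>
    (norm_le_insert' _ _).trans (by gcongr; exact norm_sub_le_div_of_mul_sq_le_inner hβ (hi p hp))
  obtain ⟨q, hweak⟩ := exists_tendsto_inner_of_ultrafilter 𝒰 hbdd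
  have hq : T q = q := eq_of_weak_tendsto_of_tendsto_sub_apply hT hbdd hweak hres
  have hxq : Tendsto x 𝒰 (𝓝 q) :=
    tendsto_of_weak_tendsto_of_mul_sq_le_inner hβ (hkey.mono fun i hi => hi q hq) (hweak _)
  refine ⟨q, hq, hxq, fun z hz => le_of_tendsto_of_tendsto ?_ ?_ (hVI.mono fun i hi => hi z hz)⟩
  · exact ((hF.inner (continuous_id.sub continuous_const)).tendsto q).comp hxq
  · simpa using hr.inner (hxq.sub_const z)

lemma exists_fixedPoint_tendsto [CompleteSpace H] (hF : Continuous F)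
    (hFmono : ∀ u v, β * ‖u - v‖ ^ 2 ≤ ⟪F u - F v, u - v⟫)
    (hT : ∀ u v, ‖T u - T v‖ ≤ ‖u - v‖) (hβ : 0 < β) {p : H} (hp : T p = p) {ι : Type*}
    {l : Filter ι} [l.NeBot] {x r : ι → H}
    (hkey : ∀ᶠ i in l, ∀ z, T z = z → β * ‖x i - z‖ ^ 2 ≤ ⟪F z, z - x i⟫)
    (hVI : ∀ᶠ i in l, ∀ z, T z = z → ⟪F (x i), x i - z⟫ ≤ ⟪r i, x i - z⟫)
    (hr : Tendsto r l (𝓝 0)) (hres : Tendsto (fun i => x i - T (x i)) l (𝓝 0)) :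
    ∃ q, T q = q ∧ Tendsto x l (𝓝 q) ∧ ∀ z, T z = z → ⟪F q, q - z⟫ ≤ 0 := by
  have hlim (𝒰 : Ultrafilter ι) (h𝒰 : ↑𝒰 ≤ l) :=
    exists_fixedPoint_tendsto_of_ultrafilter hF hT hβ hp 𝒰 (hkey.filter_mono h𝒰)
      (hVI.filter_mono h𝒰) (hr.mono_left h𝒰) (hres.mono_left h𝒰)
  obtain ⟨q, hq, -, hqVI⟩ := hlim (Ultrafilter.of l) (Ultrafilter.of_le l)
  refine ⟨q, hq, (tendsto_iff_ultrafilter _ _ _).2 fun 𝒰 h𝒰 => ?_, hqVI⟩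
  obtain ⟨q', hq', hxq', hq'VI⟩ := hlim 𝒰 h𝒰
  rwa [eq_of_variational_inequality hFmono hβ (hq'VI q hq) (hqVI q' hq')] at hxq'

lemma inner_sub_le_mul_norm_sub_sq (hf : ∀ u v, ‖f u - f v‖ ≤ α * ‖u - v‖) (u v : H) :
    ⟪f u - f v, u - v⟫ ≤ α * ‖u - v‖ ^ 2 :=
  calc ⟪f u - f v, u - v⟫ ≤ ‖f u - f v‖ * ‖u - v‖ := real_inner_le_norm _ _
    _ ≤ α * ‖u - v‖ * ‖u - v‖ := by gcongr; exact hf u v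
    _ = α * ‖u - v‖ ^ 2 := by ring

lemma mul_norm_sub_sq_le_inner_sub_smul (hA : ∀ u, γbar * ‖u‖ ^ 2 ≤ ⟪A u, u⟫)
    (hf : ∀ u v, ‖f u - f v‖ ≤ α * ‖u - v‖) (hγ : 0 ≤ γ) (u v : H) :
    (γbar - γ * α) * ‖u - v‖ ^ 2 ≤ ⟪(A u - γ • f u) - (A v - γ • f v), u - v⟫ := by
  have h : ⟪(A u - γ • f u) - (A v - γ • f v), u - v⟫ =
      ⟪A (u - v), u - v⟫ - γ * ⟪f u - f v, u - v⟫ := by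
    rw [map_sub, ← real_inner_smul_left, ← inner_sub_left]; congr 1; module
  rw [h]
  nlinarith [hA (u - v), mul_le_mul_of_nonneg_left (inner_sub_le_mul_norm_sub_sq hf u v) hγ]

lemma sub_apply_eq_smul (hx : x = (t * γ) • f x + (T x - t • A (T x))) :
    x - T x = t • (γ • f x - A (T x)) := by
  nth_rw 1 [hx]; module

lemma norm_sub_apply_le (hf : ∀ u v, ‖f u - f v‖ ≤ α * ‖u - v‖)
    (hT : ∀ u v, ‖T u - T v‖ ≤ ‖u - v‖) (hγ : 0 ≤ γ) (hα : 0 ≤ α) (ht : 0 ≤ t) {p : H}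
    (hp : T p = p) (hx : x = (t * γ) • f x + (T x - t • A (T x))) {R : ℝ} (hR : ‖x - p‖ ≤ R) :
    ‖x - T x‖ ≤ t * ((γ * α + ‖A‖) * R + ‖A p - γ • f p‖) := by
  have hsplit : γ • f x - A (T x) = γ • (f x - f p) - A (T x - T p) - (A p - γ • f p) := by
    rw [hp, map_sub]; module
  rw [sub_apply_eq_smul hx, norm_smul, Real.norm_of_nonneg ht, hsplit]
  gcongr
  calc ‖γ • (f x - f p) - A (T x - T p) - (A p - γ • f p)‖
      ≤ ‖γ • (f x - f p)‖ + ‖A (T x - T p)‖ + ‖A p - γ • f p‖ :=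
        (norm_sub_le _ _).trans (by gcongr; exact norm_sub_le _ _)
    _ ≤ γ * (α * ‖x - p‖) + ‖A‖ * ‖x - p‖ + ‖A p - γ • f p‖ := by
        rw [norm_smul, Real.norm_of_nonneg hγ]
        gcongr
        · exact hf x p
        · exact (A.le_opNorm _).trans (by gcongr; exact hT x p)
    _ ≤ (γ * α + ‖A‖) * R + ‖A p - γ • f p‖ := by
        rw [← mul_assoc, ← add_mul]; gcongr

lemma inner_sub_le_inner_apply_sub (hT : ∀ u v, ‖T u - T v‖ ≤ ‖u - v‖) (ht : 0 < t)
    (hx : x = (t * γ) • f x + (T x - t • A (T x))) (hz : T z = z) :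
    ⟪A x - γ • f x, x - z⟫ ≤ ⟪A (x - T x), x - z⟫ := by
  have h : A x - γ • f x = A (x - T x) - t⁻¹ • (x - T x) := by
    have hinv : t⁻¹ • (x - T x) = γ • f x - A (T x) := by
      rw [sub_apply_eq_smul hx, smul_smul, inv_mul_cancel₀ ht.ne', one_smul]
    rw [hinv, map_sub]; abel
  rw [h, inner_sub_left, real_inner_smul_left]
  have := inner_sub_apply_sub_nonneg hT hz x
  have : 0 ≤ t⁻¹ * ⟪x - T x, x - z⟫ := by positivity
  linarith

lemma mul_norm_sub_sq_le_inner [Nontrivial H] (hsa : (A : H →ₗ[ℝ] H).IsSymmetric)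
    (hA : ∀ u, γbar * ‖u‖ ^ 2 ≤ ⟪A u, u⟫) (hf : ∀ u v, ‖f u - f v‖ ≤ α * ‖u - v‖)
    (hT : ∀ u v, ‖T u - T v‖ ≤ ‖u - v‖) (hγ : 0 ≤ γ) (ht : 0 < t) (htA : t * ‖A‖ ≤ 1)
    (hx : x = (t * γ) • f x + (T x - t • A (T x))) (hz : T z = z) :
    (γbar - γ * α) * ‖x - z‖ ^ 2 ≤ ⟪A z - γ • f z, z - x⟫ := by
  have hdecomp :
      x - z = t • (γ • (f x - f z) - (A z - γ • f z)) + ((T x - z) - t • A (T x - z)) := by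
    nth_rw 1 [hx]; rw [map_sub]; module
  have hTx : ‖T x - z‖ ≤ ‖x - z‖ := by simpa [hz] using hT x z
  have hc : 0 ≤ 1 - t * γbar := by nlinarith [le_opNorm_of_le_inner_self hA]
  have hcontract : ⟪(T x - z) - t • A (T x - z), x - z⟫ ≤ (1 - t * γbar) * ‖x - z‖ ^ 2 :=
    calc ⟪(T x - z) - t • A (T x - z), x - z⟫ ≤ ‖(T x - z) - t • A (T x - z)‖ * ‖x - z‖ :=
          real_inner_le_norm _ _
      _ ≤ (1 - t * γbar) * ‖T x - z‖ * ‖x - z‖ := by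
          gcongr; exact norm_sub_smul_apply_le hsa hA ht.le htA _
      _ ≤ (1 - t * γbar) * ‖x - z‖ ^ 2 := by rw [sq, ← mul_assoc]; gcongr
  have hexpand : ‖x - z‖ ^ 2 = t * (γ * ⟪f x - f z, x - z⟫ + ⟪A z - γ • f z, z - x⟫)
      + ⟪(T x - z) - t • A (T x - z), x - z⟫ := by
    rw [← real_inner_self_eq_norm_sq]
    nth_rw 1 [hdecomp]
    rw [inner_add_left, real_inner_smul_left, inner_sub_left, real_inner_smul_left,
      ← neg_sub x z, inner_neg_right]
    ring
  have := mul_le_mul_of_nonneg_left (inner_sub_le_mul_norm_sub_sq hf x z) hγ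
  nlinarith [mul_le_mul_of_nonneg_left this ht.le]

end Viscosity

theorem stmt_18 {H : Type*} [NormedAddCommGroup H] [InnerProductSpace ℝ H]
    [CompleteSpace H]
    (A : H →L[ℝ] H) (hsa : IsSelfAdjoint A)
    (γbar : ℝ) (hγbar : 0 < γbar)
    (hA : ∀ u : H, γbar * ‖u‖ ^ 2 ≤ ⟪A u, u⟫)
    (f : H → H) (α : ℝ) (hα : α ∈ Set.Ioo (0 : ℝ) 1)
    (hf : ∀ u v : H, ‖f u - f v‖ ≤ α * ‖u - v‖)
    (γ : ℝ) (hγ : 0 < γ ∧ γ < γbar / α)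
    (T : H → H) (hT : ∀ u v : H, ‖T u - T v‖ ≤ ‖u - v‖)
    (hFT : ∃ u : H, T u = u)
    (xt : ℝ → H)
    (hxt : ∀ t ∈ Set.Ioo (0 : ℝ) ‖A‖⁻¹,
      xt t = (t * γ) • f (xt t) + (T (xt t) - t • A (T (xt t)))) :
    ∃ xbar : H, T xbar = xbar ∧
      Tendsto xt (nhdsWithin 0 (Set.Ioi 0)) (nhds xbar) ∧
      ∀ z : H, T z = z → ⟪A xbar - γ • f xbar, xbar - z⟫ ≤ 0 := by
  obtain ⟨p, hp⟩ := hFT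
  rcases subsingleton_or_nontrivial H with _ | _
  · exact ⟨p, hp, tendsto_const_nhds.congr fun _ => Subsingleton.elim _ _,
      fun z _ => by simp [Subsingleton.elim (A p - γ • f p) 0]⟩
  have hβ : 0 < γbar - γ * α := by nlinarith [(lt_div_iff₀ hα.1).mp hγ.2]
  have hsym := ContinuousLinearMap.isSelfAdjoint_iff_isSymmetric.mp hsa
  have hApos : 0 < ‖A‖ := hγbar.trans_le (le_opNorm_of_le_inner_self hA)
  have hsmall : ∀ᶠ t in 𝓝[>] (0 : ℝ), t ∈ Set.Ioo 0 ‖A‖⁻¹ := Ioo_mem_nhdsGT (inv_pos.2 hApos)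
  have htA : ∀ t ∈ Set.Ioo (0 : ℝ) ‖A‖⁻¹, t * ‖A‖ ≤ 1 := fun t ht =>
    (le_div_iff₀ hApos).mp (by rw [one_div]; exact ht.2.le)
  have hkey : ∀ t ∈ Set.Ioo (0 : ℝ) ‖A‖⁻¹, ∀ z, T z = z →
      (γbar - γ * α) * ‖xt t - z‖ ^ 2 ≤ ⟪A z - γ • f z, z - xt t⟫ := fun t ht z hz =>
    mul_norm_sub_sq_le_inner hsym hA hf hT hγ.1.le ht.1 (htA t ht) (hxt t ht) hz
  have hres : Tendsto (fun t => xt t - T (xt t)) (𝓝[>] 0) (𝓝 0) :=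
    squeeze_zero_norm' (hsmall.mono fun t ht => norm_sub_apply_le hf hT hγ.1.le hα.1.le ht.1.le hp
        (hxt t ht) (norm_sub_le_div_of_mul_sq_le_inner hβ (hkey t ht p hp)))
      (tendsto_nhdsWithin_of_tendsto_nhds ((continuous_mul_const _).tendsto' 0 0 (zero_mul _)))
  have hfc : Continuous f :=
    (LipschitzWith.of_dist_le' (by simpa [dist_eq_norm] using hf)).continuous
  exact exists_fixedPoint_tendsto (F := fun y => A y - γ • f y)
    (r := fun t => A (xt t - T (xt t)))
    (A.continuous.sub (hfc.const_smul γ)) (mul_norm_sub_sq_le_inner_sub_smul hA hf hγ.1.le)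
    hT hβ hp (hsmall.mono hkey)
    (hsmall.mono fun t ht z hz => inner_sub_le_inner_apply_sub hT ht.1 (hxt t ht) hz)
    (by simpa [Function.comp_def] using (A.continuous.tendsto 0).comp hres) hres
end
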